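/- Let d⁻_m = (m−1)(m+1)²/(2m²) for integers m ≥ 1. Let x : ℕ → ℝ (indexed by k ≥ 0, with x_0 an arbitrary real) satisfy ∑_{k≥1} k·x_k² < ∞. Then all series below converge absolutely and ∑_{k≥1} x_k·(d⁻_{k+1}·x_{k+1} − (d⁻_{k+1} − d⁻_k)·x_k − d⁻_k·x_{k−1}) ≤ −(1/2)·∑_{k≥1} x_k². -/
import Mathlib


/-- The coefficients `d⁻_m = (m-1)(m+1)²/(2m²)`. -/
noncomputable def dMinus (m : ℕ) : ℝ := ((m : ℝ) - 1) * ((m : ℝ) + 1) ^ 2 / (2 * (m : ℝ) ^ 2)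

lemma dMinus_one : dMinus 1 = 0 := by norm_num [dMinus]

lemma dMinus_succ_nonneg (k : ℕ) : 0 ≤ dMinus (k + 1) := by
  unfold dMinus
  have hn : (0:ℝ) ≤ (k:ℝ) := Nat.cast_nonneg k
  push_cast
  apply div_nonneg (by nlinarith [sq_nonneg ((k:ℝ)+2)]) (by positivity)

lemma dMinus_succ_le (k : ℕ) : dMinus (k + 1) ≤ 2 * ((k:ℝ) + 1) := by
  unfold dMinus
  have hn : (0:ℝ) ≤ (k:ℝ) := Nat.cast_nonneg k
  push_cast
  rw [div_le_iff₀ (by positivity)]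
  nlinarith [sq_nonneg ((k:ℝ))]

lemma dMinus_diff_ge (k : ℕ) : (1:ℝ)/2 ≤ dMinus (k + 2) - dMinus (k + 1) := by
  unfold dMinus
  have hn : (0:ℝ) ≤ (k:ℝ) := Nat.cast_nonneg k
  push_cast
  have key : ((k:ℝ) + 2 - 1) * ((k:ℝ) + 2 + 1) ^ 2 / (2 * ((k:ℝ) + 2) ^ 2)
      - ((k:ℝ) + 1 - 1) * ((k:ℝ) + 1 + 1) ^ 2 / (2 * ((k:ℝ) + 1) ^ 2) - 1/2
      = ((k:ℝ)^2 + 5*(k:ℝ) + 5) / (2 * ((k:ℝ)+1)^2 * ((k:ℝ)+2)^2) := by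
    field_simp
    ring
  have hpos : (0:ℝ) ≤ ((k:ℝ)^2 + 5*(k:ℝ) + 5) / (2 * ((k:ℝ)+1)^2 * ((k:ℝ)+2)^2) := by positivity
  linarith

/-- Coordinate form of the linear stability estimate
`⟨η, L⁻η⟩_{ℋ₀} ≤ -(1/2)⟦η⟧²_{ℋ₀}`: for any sequence `x` with
`∑_{k≥1} k·x_k² < ∞`, the series
`∑_{k≥1} x_k (d⁻_{k+1} x_{k+1} - (d⁻_{k+1}-d⁻_k) x_k - d⁻_k x_{k-1})`
converges absolutely and is at most `-(1/2) ∑_{k≥1} x_k²`. -/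
theorem Lminus_quadratic_form_bound (x : ℕ → ℝ)
    (hx : Summable fun k : ℕ => (k : ℝ) * x k ^ 2) :
    Summable (fun k : ℕ =>
      |x (k + 1) * (dMinus (k + 2) * x (k + 2)
        - (dMinus (k + 2) - dMinus (k + 1)) * x (k + 1) - dMinus (k + 1) * x k)|)
    ∧ Summable (fun k : ℕ => x (k + 1) ^ 2)
    ∧ (∑' k : ℕ, x (k + 1) * (dMinus (k + 2) * x (k + 2)
          - (dMinus (k + 2) - dMinus (k + 1)) * x (k + 1) - dMinus (k + 1) * x k))
        ≤ -(1 / 2) * ∑' k : ℕ, x (k + 1) ^ 2 := by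
  -- shifted summability
  have hx1 : Summable fun k : ℕ => ((k:ℝ) + 1) * x (k + 1) ^ 2 := by
    have := (summable_nat_add_iff 1).2 hx
    simpa [Nat.cast_add] using this
  have hs1 : Summable fun k : ℕ => x (k + 1) ^ 2 := by
    apply Summable.of_nonneg_of_le (fun k => sq_nonneg _) (fun k => ?_) hx1
    nlinarith [sq_nonneg (x (k + 1)), Nat.cast_nonneg (α := ℝ) k]
  have hs0 : Summable fun k : ℕ => x k ^ 2 := (summable_nat_add_iff 1).1 hs1
  -- the cross sequence
  set c : ℕ → ℝ := fun k => dMinus (k + 1) * (x k * x (k + 1)) with hc_def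
  have hc : Summable c := by
    apply Summable.of_norm
    have hmaj : Summable fun k : ℕ => ((k:ℝ) + 1) * (x k ^ 2 + x (k + 1) ^ 2) := by
      have h1 : Summable fun k : ℕ => ((k:ℝ) + 1) * x k ^ 2 := by
        simpa [add_mul, one_mul] using hx.add hs0
      simpa [mul_add] using h1.add hx1
    apply Summable.of_nonneg_of_le (fun k => norm_nonneg _) (fun k => ?_) hmaj
    have hd0 := dMinus_succ_nonneg k
    have hd1 := dMinus_succ_le k
    have habs : |x k * x (k + 1)| ≤ (x k ^ 2 + x (k + 1) ^ 2) / 2 := by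
      rw [abs_le]
      constructor <;> nlinarith [sq_nonneg (x k + x (k + 1)), sq_nonneg (x k - x (k + 1))]
    have hn : (0:ℝ) ≤ (k:ℝ) := Nat.cast_nonneg k
    calc ‖c k‖ = dMinus (k + 1) * |x k * x (k + 1)| := by
          rw [hc_def]; simp [abs_mul, abs_of_nonneg hd0]
      _ ≤ (2 * ((k:ℝ) + 1)) * ((x k ^ 2 + x (k + 1) ^ 2) / 2) := by
          apply mul_le_mul hd1 habs (abs_nonneg _) (by positivity)
      _ = ((k:ℝ) + 1) * (x k ^ 2 + x (k + 1) ^ 2) := by ring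
  -- the diagonal sequence
  set e : ℕ → ℝ := fun k => (dMinus (k + 2) - dMinus (k + 1)) * x (k + 1) ^ 2 with he_def
  have he_nonneg : ∀ k, 0 ≤ e k := fun k =>
    mul_nonneg (le_trans (by norm_num) (dMinus_diff_ge k)) (sq_nonneg _)
  have he : Summable e := by
    have hmaj : Summable fun k : ℕ => 2 * (((k:ℝ) + 2) * x (k + 1) ^ 2) := by
      apply Summable.mul_left
      apply Summable.of_nonneg_of_le (fun k => by positivity) (fun k => ?_)
        (hx1.add hs1)
      have hn : (0:ℝ) ≤ (k:ℝ) := Nat.cast_nonneg k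
      nlinarith [sq_nonneg (x (k + 1))]
    apply Summable.of_nonneg_of_le he_nonneg (fun k => ?_) hmaj
    have hd0 := dMinus_succ_nonneg k
    have hd1 := dMinus_succ_le (k + 1)
    have hn : (0:ℝ) ≤ (k:ℝ) := Nat.cast_nonneg k
    have : dMinus (k + 2) - dMinus (k + 1) ≤ 2 * ((k:ℝ) + 2) := by
      have := dMinus_succ_le (k + 1)
      push_cast at this ⊢
      linarith
    calc e k ≤ (2 * ((k:ℝ) + 2)) * x (k + 1) ^ 2 :=
          mul_le_mul_of_nonneg_right this (sq_nonneg _)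
      _ = 2 * (((k:ℝ) + 2) * x (k + 1) ^ 2) := by ring
  -- the main identity for each term
  have hT : ∀ k : ℕ, x (k + 1) * (dMinus (k + 2) * x (k + 2)
      - (dMinus (k + 2) - dMinus (k + 1)) * x (k + 1) - dMinus (k + 1) * x k)
      = c (k + 1) - c k - e k := by
    intro k
    simp only [hc_def, he_def]
    ring
  have hcsucc : Summable fun k : ℕ => c (k + 1) := (summable_nat_add_iff 1).2 hc
  have hTsum : Summable fun k : ℕ => x (k + 1) * (dMinus (k + 2) * x (k + 2)
      - (dMinus (k + 2) - dMinus (k + 1)) * x (k + 1) - dMinus (k + 1) * x k) := by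
    have : Summable fun k : ℕ => c (k + 1) - c k - e k := (hcsucc.sub hc).sub he
    exact this.congr fun k => (hT k).symm
  refine ⟨summable_abs_iff.2 hTsum, hs1, ?_⟩
  have htel : (∑' k : ℕ, (c (k + 1) - c k - e k)) = -∑' k, e k := by
    rw [Summable.tsum_sub (hcsucc.sub hc) he, Summable.tsum_sub hcsucc hc]
    have h0 : ∑' k : ℕ, c k = c 0 + ∑' k : ℕ, c (k + 1) := Summable.tsum_eq_zero_add hc
    have hc0 : c 0 = 0 := by simp [hc_def, dMinus_one]
    rw [h0, hc0]
    ring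
  calc (∑' k : ℕ, x (k + 1) * (dMinus (k + 2) * x (k + 2)
          - (dMinus (k + 2) - dMinus (k + 1)) * x (k + 1) - dMinus (k + 1) * x k))
      = ∑' k : ℕ, (c (k + 1) - c k - e k) := tsum_congr hT
    _ = -∑' k, e k := htel
    _ ≤ -(1 / 2) * ∑' k : ℕ, x (k + 1) ^ 2 := by
        rw [neg_mul, neg_le_neg_iff]
        calc (1:ℝ)/2 * ∑' k : ℕ, x (k + 1) ^ 2
            = ∑' k : ℕ, (1/2) * x (k + 1) ^ 2 := (tsum_mul_left).symm
          _ ≤ ∑' k : ℕ, e k := by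
              apply Summable.tsum_le_tsum (fun k => ?_) (hs1.mul_left _) he
              exact mul_le_mul_of_nonneg_right (dMinus_diff_ge k) (sq_nonneg _)
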